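/- arXiv:0806.1503 — 6 statements merged into one kernel-verified Lean document; each statement's English description precedes it below -/
import Mathlib

section
/- Define T(n,k) for integers n ≥ 0, 0 ≤ k ≤ n by T(n,0) = T(n,n) = 1 and T(n,k) = 2·T(n-1,k-1) + T(n-1,k) for 0 < k < n (with T(n,k)=0 outside 0 ≤ k ≤ n). Then for all 0 ≤ k ≤ n, T(n,k) = ∑_{i=n-k}^{n} (-1)^{n-k-i} · 2^{n-i} · C(n,i). -/
/-!
Writing `S(n, k) = ∑_{j ≤ k} (-1)^(k-j) 2^j C(n, j)` for the alternating partial sums of the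
coefficients of `(1 + 2X)^n`, Pascal's rule for `C(n+1, j+1)` gives
`S(n+1, k+1) = 2 S(n, k) + S(n, k+1)`, while `S(n, 0) = 1` and `S(n, n) = (2 - 1)^n = 1`.
So `S` and `T` obey the same recurrence and boundary values on `0 ≤ k ≤ n`; the stated sum is
`S(n, k)` reindexed by `i = n - j`.
-/

/-- Sloane's A119258: `T n 0 = T n n = 1` and `T n k = 2 T (n-1) (k-1) + T (n-1) k`
for `0 < k < n`, with `T n k = 0` for `k > n`. -/
def T : ℕ → ℕ → ℤ
  | _, 0 => 1
  | 0, _ + 1 => 0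
  | n + 1, k + 1 =>
    if n + 1 ≤ k + 1 then (if k + 1 = n + 1 then 1 else 0)
    else 2 * T n k + T n (k + 1)

open Finset

section AltChooseSum

variable {R : Type*} [CommRing R]

def altChooseSum (x : R) (n k : ℕ) : R :=
  ∑ j ∈ range (k + 1), (-1) ^ (k - j) * x ^ j * n.choose j

@[simp]
lemma altChooseSum_zero_right (x : R) (n : ℕ) : altChooseSum x n 0 = 1 := by
  simp [altChooseSum]

lemma altChooseSum_self (x : R) (n : ℕ) : altChooseSum x n n = (x - 1) ^ n := by
  rw [sub_pow, altChooseSum]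
  refine sum_congr rfl fun j hj => ?_
  have hjn : j ≤ n := Nat.lt_succ_iff.mp (mem_range.mp hj)
  have sign : (-1 : R) ^ (j + n) = (-1) ^ (n - j) := by
    rw [show j + n = (n - j) + 2 * j by omega, pow_add, pow_mul, neg_one_sq, one_pow, mul_one]
  rw [sign, one_pow, mul_one]

lemma altChooseSum_succ_succ (x : R) (n k : ℕ) :
    altChooseSum x (n + 1) (k + 1) = x * altChooseSum x n k + altChooseSum x n (k + 1) := by
  have pascal : ∀ j ∈ range (k + 1),
      (-1) ^ (k + 1 - (j + 1)) * x ^ (j + 1) * ((n + 1).choose (j + 1) : R) =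
        x * ((-1) ^ (k - j) * x ^ j * n.choose j) +
          (-1) ^ (k + 1 - (j + 1)) * x ^ (j + 1) * n.choose (j + 1) := by
    intro j _
    rw [Nat.choose_succ_succ, Nat.cast_add, Nat.add_sub_add_right]
    ring
  simp only [altChooseSum]
  rw [sum_range_succ' _ (k + 1), sum_range_succ' _ (k + 1), sum_congr rfl pascal,
    sum_add_distrib, mul_sum]
  simp only [Nat.choose_zero_right]
  ring

end AltChooseSum

lemma T_self (n : ℕ) : T n n = 1 := by
  cases n <;> simp [T]

lemma T_succ_succ {n k : ℕ} (h : k < n) : T (n + 1) (k + 1) = 2 * T n k + T n (k + 1) := by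
  simp [T, Nat.not_le.mpr h]

lemma T_eq_altChooseSum {n k : ℕ} (h : k ≤ n) : T n k = altChooseSum 2 n k := by
  induction n generalizing k with
  | zero =>
    obtain rfl := Nat.le_zero.mp h
    simp [T]
  | succ n ih =>
    rcases k with _ | k
    · simp [T]
    rcases (Nat.succ_le_succ_iff.mp h).lt_or_eq with hk | rfl
    · rw [T_succ_succ hk, altChooseSum_succ_succ, ih hk.le, ih hk]
    · rw [T_self, altChooseSum_self]
      norm_num

theorem stmt0 (n k : ℕ) (h : k ≤ n) :
    T n k = ∑ i ∈ Finset.Icc (n - k) n,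
      (-1 : ℤ) ^ (i - (n - k)) * 2 ^ (n - i) * (n.choose i) := by
  rw [T_eq_altChooseSum h, altChooseSum, ← Ico_add_one_right_eq_Icc,
    show Ico (n - k) (n + 1) = Ico (n + 1 - (k + 1)) (n + 1 - 0) by simp,
    ← sum_Ico_reflect _ 0 (Nat.succ_le_succ h), range_eq_Ico]
  refine sum_congr rfl fun j hj => ?_
  have hjk : j ≤ k := Nat.lt_succ_iff.mp (mem_Ico.mp hj).2
  rw [Nat.sub_sub_self (hjk.trans h), Nat.choose_symm (hjk.trans h),
    show n - j - (n - k) = k - j by omega]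
end

section
/- Let T1(n,k) = ∑_{i=n-k}^{n} (-1)^{n-k-i} 2^{n-i} C(n,i) and T2(n,k) = ∑_{i=n-k}^{n} C(n,i) C(i-1, n-k-1) (with C(-1,-1)=1). Then T1(n,k) = T2(n,k) for all 0 ≤ k ≤ n. -/
/-!
Write `m = n - k` for the lower summation bound. Both sums `f m` vanish at `m = n + 1` and satisfy
`f m + f (m + 1) = 2 ^ (n - m) * C(n, m)`, so they agree by downward induction on `m`. For the
alternating sum this is seen by splitting off the first term. For the other it follows from
Pascal's rule `C(i - 1, m - 1) + C(i - 1, m) = C(i, m)`, which the convention `C(-1, -1) = 1` keeps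
valid at `i = 0`, together with `∑ i, C(n, i) * C(i, m) = 2 ^ (n - m) * C(n, m)`.
-/

/-- Integer binomial coefficient `C a b`, zero for `b < 0` or `b > a`, with the
additional convention `C (-1) (-1) = 1`. -/
def ibc (a b : ℤ) : ℤ :=
  if a = -1 ∧ b = -1 then 1
  else if 0 ≤ b ∧ b ≤ a then (a.toNat).choose b.toNat else 0

open Finset

theorem Finset.sum_Icc_natCast {M : Type*} [AddCommMonoid M] (a b : ℕ) (f : ℤ → M) :
    ∑ i ∈ Icc (a : ℤ) b, f i = ∑ i ∈ Icc a b, f i := by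
  symm
  refine sum_nbij' (↑) Int.toNat ?_ ?_ ?_ ?_ ?_ <;> intro i hi <;> simp only [mem_Icc] at hi
  · simp only [mem_Icc]; omega
  · simp only [mem_Icc]; omega
  · simp
  · rw [Int.toNat_of_nonneg (by omega)]
  · rfl

theorem ibc_natCast (a b : ℕ) : ibc a b = a.choose b := by
  unfold ibc
  rw [if_neg (by omega)]
  split_ifs
  · simp
  · rw [Nat.choose_eq_zero_of_lt (by omega), Nat.cast_zero]

theorem ibc_sub_one_self (m : ℕ) : ibc ((m : ℤ) - 1) m = 0 := by
  unfold ibc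
  rw [if_neg (by omega), if_neg (by omega)]

theorem ibc_sub_one_add_ibc_sub_one (i m : ℕ) :
    ibc ((i : ℤ) - 1) ((m : ℤ) - 1) + ibc ((i : ℤ) - 1) m = i.choose m := by
  cases i with
  | zero =>
    cases m with
    | zero => simp [ibc]
    | succ l => simp only [ibc]; rw [if_neg (by omega), if_neg (by omega), if_neg (by omega)]; simp
  | succ j =>
    have hj : ((j + 1 : ℕ) : ℤ) - 1 = j := by push_cast; ring
    rw [hj, ibc_natCast]
    cases m with
    | zero => simp [ibc]
    | succ l =>
      rw [show ((l + 1 : ℕ) : ℤ) - 1 = l by push_cast; ring, ibc_natCast, Nat.choose_succ_succ]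
      push_cast; ring

theorem Nat.sum_Icc_choose_mul_choose (n m : ℕ) :
    ∑ i ∈ Icc m n, n.choose i * i.choose m = 2 ^ (n - m) * n.choose m := by
  rcases lt_or_ge n m with hnm | hmn
  · simp [Icc_eq_empty_of_lt hnm, Nat.choose_eq_zero_of_lt hnm]
  calc ∑ i ∈ Icc m n, n.choose i * i.choose m
      = ∑ i ∈ Icc m n, n.choose m * (n - m).choose (i - m) :=
        sum_congr rfl fun i hi => Nat.choose_mul (mem_Icc.mp hi).1
    _ = n.choose m * ∑ j ∈ range (n - m + 1), (n - m).choose j := by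
        rw [← mul_sum, ← Ico_add_one_right_eq_Icc, sum_Ico_eq_sum_range,
          show n + 1 - m = n - m + 1 by omega]
        simp
    _ = 2 ^ (n - m) * n.choose m := by rw [Nat.sum_range_choose, mul_comm]

def alternatingSum (n m : ℕ) : ℤ :=
  ∑ i ∈ Icc m n, (-1 : ℤ) ^ (i - m) * 2 ^ (n - i) * (n.choose i)

def binomialProductSum (n m : ℕ) : ℤ :=
  ∑ i ∈ Icc m n, (n.choose i : ℤ) * ibc ((i : ℤ) - 1) ((m : ℤ) - 1)

theorem alternatingSum_add_succ {n m : ℕ} (hm : m ≤ n) :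
    alternatingSum n m + alternatingSum n (m + 1) = 2 ^ (n - m) * n.choose m := by
  have tail : ∑ i ∈ Ioc m n, (-1 : ℤ) ^ (i - m) * 2 ^ (n - i) * (n.choose i)
      = -alternatingSum n (m + 1) := by
    rw [alternatingSum, Icc_add_one_left_eq_Ioc, ← sum_neg_distrib]
    refine sum_congr rfl fun i hi => ?_
    rw [show i - m = i - (m + 1) + 1 by have := (mem_Ioc.mp hi).1; omega, pow_succ]
    ring
  rw [alternatingSum, Icc_eq_cons_Ioc hm, sum_cons, tail, Nat.sub_self]
  ring

theorem binomialProductSum_add_succ (n m : ℕ) :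
    binomialProductSum n m + binomialProductSum n (m + 1) = 2 ^ (n - m) * n.choose m := by
  have extend : binomialProductSum n (m + 1)
      = ∑ i ∈ Icc m n, (n.choose i : ℤ) * ibc ((i : ℤ) - 1) m := by
    rw [binomialProductSum, Nat.cast_succ, add_sub_cancel_right]
    apply sum_subset (Icc_subset_Icc_left m.le_succ)
    intro i hi hi'
    rw [show i = m by simp only [mem_Icc] at hi hi'; omega, ibc_sub_one_self, mul_zero]
  rw [extend, binomialProductSum, ← sum_add_distrib]
  simp_rw [← mul_add, ibc_sub_one_add_ibc_sub_one]
  exact_mod_cast Nat.sum_Icc_choose_mul_choose n m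

theorem alternatingSum_eq_binomialProductSum {n m : ℕ} (hm : m ≤ n + 1) :
    alternatingSum n m = binomialProductSum n m := by
  induction hm using Nat.decreasingInduction with
  | self => simp [alternatingSum, binomialProductSum]
  | of_succ m hm ih =>
    have := binomialProductSum_add_succ n m
    rw [← alternatingSum_add_succ (Nat.lt_succ_iff.mp hm), ih] at this
    linarith

theorem stmt5 (n k : ℕ) (h : k ≤ n) :
    ∑ i ∈ Finset.Icc (n - k) n, (-1 : ℤ) ^ (i - (n - k)) * 2 ^ (n - i) * (n.choose i)
      = ∑ i ∈ Finset.Icc ((n : ℤ) - k) (n : ℤ), ibc n i * ibc (i - 1) ((n : ℤ) - k - 1) := by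
  have hnk : (n : ℤ) - k = (n - k : ℕ) := by omega
  rw [hnk, sum_Icc_natCast]
  simp_rw [ibc_natCast]
  exact alternatingSum_eq_binomialProductSum (by omega)
end

section
/- Let n ≥ 4, v' ∈ Ψ⁻_n, S ⊆ {1,…,n}, and suppose |K(v',S)| ≥ 3, where K(v',S) = {v ∈ Ψ⁺_n : v differs from v' in exactly one coordinate, which lies in S}. Then v' and S are uniquely determined by the set K(v',S): if K(v',S) = K(u',S') with |S|,|S'| ≥ 3 then v' = u' and S = S'. -/
/-- The vertex set of the hypercube: vectors with all coordinates `±1`. -/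
def PsiSet (n : ℕ) : Set (Fin n → ℤ) := {v | ∀ i, v i = 1 ∨ v i = -1}

/-- The number of coordinates equal to `-1`. -/
def negCount {n : ℕ} (v : Fin n → ℤ) : ℕ := (Finset.univ.filter fun i => v i = -1).card

/-- `Ψ⁺ₙ`: `±1`-vectors with an even number of `-1` coordinates. -/
def PsiPlus (n : ℕ) : Set (Fin n → ℤ) := {v | v ∈ PsiSet n ∧ Even (negCount v)}

/-- `Ψ⁻ₙ`: `±1`-vectors with an odd number of `-1` coordinates. -/
def PsiMinus (n : ℕ) : Set (Fin n → ℤ) := {v | v ∈ PsiSet n ∧ ¬ Even (negCount v)}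

/-- Hamming distance: the number of coordinates at which `x` and `y` differ. -/
def hamming {n : ℕ} (x y : Fin n → ℤ) : ℕ := (Finset.univ.filter fun i => x i ≠ y i).card

/-- `K(v', S)`: the set of vertices of `Ψ⁺ₙ` differing from `v'` in exactly one
coordinate, that coordinate lying in `S`. -/
def Kset {n : ℕ} (v' : Fin n → ℤ) (S : Finset (Fin n)) : Set (Fin n → ℤ) :=
  {w | w ∈ PsiPlus n ∧ ∃ i ∈ S, w i ≠ v' i ∧ ∀ j, j ≠ i → w j = v' j}

/-- `L(v, S)`: the set of vertices of `Ψ⁺ₙ` agreeing with `v` at all coordinates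
outside `S`. -/
def Lset {n : ℕ} (v : Fin n → ℤ) (S : Finset (Fin n)) : Set (Fin n → ℤ) :=
  {w | w ∈ PsiPlus n ∧ ∀ i, i ∉ S → w i = v i}

/-! Flipping one coordinate of a `±1`-vector negates the product of its coordinates, so the
flips of `v' ∈ Ψ⁻` at the coordinates of `S` are exactly the elements of `K(v', S)`. If `v'` and
`u'` differ at `j`, choose `a ≠ b` in `S` other than `j`: the flips of `v'` at `a` and at `b` both
disagree with `u'` at `j`, hence agree with `u'` everywhere else, in particular at `a`, which
forces `-v' a = v' a`. Once `v' = u'`, `S` is read off as the set of flipped coordinates. -/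

def flipCoord {ι R : Type*} [DecidableEq ι] [Neg R] (v : ι → R) (i : ι) : ι → R :=
  Function.update v i (-v i)

section flipCoord

variable {ι R : Type*} [DecidableEq ι] [Neg R] (v : ι → R) {i j : ι}

@[simp]
theorem flipCoord_self : flipCoord v i i = -v i :=
  Function.update_self ..

theorem flipCoord_of_ne (h : j ≠ i) : flipCoord v i j = v j :=
  Function.update_of_ne h ..

theorem prod_flipCoord {R : Type*} [CommRing R] [Fintype ι] (v : ι → R) (i : ι) :
    ∏ j, flipCoord v i j = -∏ j, v j := by
  rw [flipCoord, Finset.prod_update_of_mem (Finset.mem_univ i), ← Finset.mul_prod_erase _ _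
    (Finset.mem_univ i), neg_mul, Finset.sdiff_singleton_eq_erase]

end flipCoord

section PsiSet

variable {n : ℕ} {v : Fin n → ℤ}

theorem neg_apply_ne_of_mem_PsiSet (hv : v ∈ PsiSet n) (i : Fin n) : -v i ≠ v i := by
  rcases hv i with h | h <;> simp [h]

theorem flipCoord_mem_PsiSet (hv : v ∈ PsiSet n) (i : Fin n) : flipCoord v i ∈ PsiSet n := by
  intro j
  rcases eq_or_ne j i with rfl | hji
  · rcases hv j with h | h <;> simp [h]
  · rw [flipCoord_of_ne v hji]; exact hv j

theorem prod_eq_neg_one_pow_negCount (hv : v ∈ PsiSet n) : ∏ i, v i = (-1) ^ negCount v := by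
  calc ∏ i, v i = ∏ i, if v i = -1 then -1 else 1 :=
        Finset.prod_congr rfl fun i _ => by rcases hv i with h | h <;> simp [h]
    _ = (-1) ^ negCount v := by simp [Finset.prod_ite, negCount]

theorem even_negCount_iff (hv : v ∈ PsiSet n) : Even (negCount v) ↔ ∏ i, v i = 1 := by
  rw [prod_eq_neg_one_pow_negCount hv, neg_one_pow_eq_one_iff_even (by norm_num)]

theorem flipCoord_mem_PsiPlus (hv : v ∈ PsiMinus n) (i : Fin n) : flipCoord v i ∈ PsiPlus n := by
  have hflip := flipCoord_mem_PsiSet hv.1 i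
  refine ⟨hflip, ?_⟩
  rw [even_negCount_iff hflip, prod_flipCoord, prod_eq_neg_one_pow_negCount hv.1,
    neg_eq_neg_one_mul, ← pow_succ', neg_one_pow_eq_one_iff_even (by norm_num), Nat.even_add_one]
  exact hv.2

end PsiSet

section Kset

variable {n : ℕ} {u v : Fin n → ℤ} {S S' : Finset (Fin n)}

theorem apply_eq_of_mem_Kset_of_apply_ne {w : Fin n → ℤ} (hw : w ∈ Kset u S) {j k : Fin n}
    (hj : w j ≠ u j) (hk : k ≠ j) : w k = u k := by
  obtain ⟨-, i, -, -, heq⟩ := hw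
  obtain rfl : j = i := by_contra fun hji => hj (heq j hji)
  exact heq k hk

theorem flipCoord_mem_Kset_iff (hv : v ∈ PsiMinus n) {i : Fin n} :
    flipCoord v i ∈ Kset v S ↔ i ∈ S := by
  refine ⟨?_, fun hi => ⟨flipCoord_mem_PsiPlus hv i, i, hi, ?_, ?_⟩⟩
  · rintro ⟨-, k, hk, -, heq⟩
    obtain rfl : i = k := by_contra fun hik =>
      neg_apply_ne_of_mem_PsiSet hv.1 i (by simpa using heq i hik)
    exact hk
  · simpa using neg_apply_ne_of_mem_PsiSet hv.1 i
  · exact fun j hj => flipCoord_of_ne v hj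

theorem Kset_injective (hv : v ∈ PsiMinus n) : Function.Injective (Kset v) := fun S S' h => by
  ext i
  rw [← flipCoord_mem_Kset_iff hv, ← flipCoord_mem_Kset_iff hv, h]

theorem eq_of_Kset_eq (hv : v ∈ PsiMinus n) (hS : 3 ≤ S.card) (h : Kset v S = Kset u S') :
    v = u := by
  funext j
  by_contra hj
  obtain ⟨a, ha, b, hb, hab⟩ := Finset.one_lt_card.mp
    (by have := Finset.pred_card_le_card_erase (s := S) (a := j); omega : 1 < (S.erase j).card)
  have key : ∀ x ∈ S.erase j, flipCoord v x a = u a := fun x hx => by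
    obtain ⟨hxj, hxS⟩ := Finset.mem_erase.mp hx
    have hmem : flipCoord v x ∈ Kset u S' := h ▸ (flipCoord_mem_Kset_iff hv).mpr hxS
    exact apply_eq_of_mem_Kset_of_apply_ne hmem (by rwa [flipCoord_of_ne v hxj.symm])
      (Finset.ne_of_mem_erase ha)
  have hva := key a ha
  rw [flipCoord_self, ← key b hb, flipCoord_of_ne v hab] at hva
  exact neg_apply_ne_of_mem_PsiSet hv.1 a hva

end Kset

theorem stmt10_general (n : ℕ) (v' u' : Fin n → ℤ)
    (hv' : v' ∈ PsiMinus n)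
    (S S' : Finset (Fin n)) (hS : 3 ≤ S.card)
    (h : Kset v' S = Kset u' S') : v' = u' ∧ S = S' := by
  obtain rfl := eq_of_Kset_eq hv' hS h
  exact ⟨rfl, Kset_injective hv' h⟩

theorem stmt10 (n : ℕ) (hn : 4 ≤ n) (v' u' : Fin n → ℤ)
    (hv' : v' ∈ PsiMinus n) (hu' : u' ∈ PsiMinus n)
    (S S' : Finset (Fin n)) (hS : 3 ≤ S.card) (hS' : 3 ≤ S'.card)
    (h : Kset v' S = Kset u' S') : v' = u' ∧ S = S' :=
  stmt10_general n v' u' hv' S S' hS h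
end

section
/- For n ≥ 4, every clique of the half cube graph ½H_n is of the form K(v',S) for some v' ∈ Ψ⁻_n and S ⊆ {1,…,n}, or of the form L(v,S) for some v ∈ Ψ⁺_n and S ⊆ {1,…,n} with |S| = 3. -/
/-!
Fix `x ∈ C`. For `±1`-vectors the map `w ↦ diffSet x w` is injective and
`diffSet y z = diffSet x y ∆ diffSet x z`, so the sets `diffSet x c` for `c ∈ C \ {x}` are pairs
any two of which meet in exactly one point. Such a family of pairs is either a star with some
centre `j`, and then every vertex of `C` is at distance one from the odd vector obtained from `x`
by flipping its `j`-th sign, or the three sides of a triangle `{a, b, c}`, and then `C` is the set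
of all even vectors agreeing with `x` outside `{a, b, c}`.
-/

open Finset Function
open scoped symmDiff

section SignVectors

variable {n : ℕ} {x y z : Fin n → ℤ}

def diffSet (x y : Fin n → ℤ) : Finset (Fin n) := {i | x i ≠ y i}

lemma hamming_eq_card_diffSet (x y : Fin n → ℤ) : hamming x y = #(diffSet x y) := rfl

@[simp]
lemma mem_diffSet {i : Fin n} : i ∈ diffSet x y ↔ x i ≠ y i := by simp [diffSet]

@[simp]
lemma diffSet_self (x : Fin n → ℤ) : diffSet x x = ∅ := by ext; simp

lemma eq_neg_of_ne {a b : ℤ} (ha : a = 1 ∨ a = -1) (hb : b = 1 ∨ b = -1) (h : a ≠ b) :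
    b = -a := by
  rcases ha with rfl | rfl <;> rcases hb with rfl | rfl <;> simp_all

lemma eq_of_diffSet_eq (hx : x ∈ PsiSet n) (hy : y ∈ PsiSet n) (hz : z ∈ PsiSet n)
    (h : diffSet x y = diffSet x z) : y = z := by
  funext i
  have hi : x i ≠ y i ↔ x i ≠ z i := by simpa using congr(i ∈ $h)
  by_cases hxy : x i = y i
  · rw [← hxy]; simpa [hxy] using hi
  · rw [eq_neg_of_ne (hx i) (hy i) hxy, eq_neg_of_ne (hx i) (hz i) (hi.1 hxy)]

lemma diffSet_eq_symmDiff (hx : x ∈ PsiSet n) (hy : y ∈ PsiSet n) (hz : z ∈ PsiSet n) :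
    diffSet y z = diffSet x y ∆ diffSet x z := by
  ext i
  rcases hx i with h | h <;> rcases hy i with h' | h' <;> rcases hz i with h'' | h'' <;>
    simp [mem_symmDiff, h, h', h'']

lemma update_neg_mem_psiSet (hx : x ∈ PsiSet n) (j : Fin n) :
    update x j (-x j) ∈ PsiSet n := by
  intro i
  rcases eq_or_ne i j with rfl | hij
  · rcases hx i with h | h <;> simp [h]
  · simpa [hij] using hx i

lemma diffSet_update_neg (hx : x ∈ PsiSet n) (j : Fin n) :
    diffSet x (update x j (-x j)) = {j} := by
  ext i
  rcases eq_or_ne i j with rfl | hij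
  · rcases hx i with h | h <;> simp [h]
  · simp [hij]

lemma negCount_add_negCount (hx : x ∈ PsiSet n) (hy : y ∈ PsiSet n) :
    negCount x + negCount y = #(diffSet x y) + 2 * #{i | x i = -1 ∧ y i = -1} := by
  simp only [negCount, diffSet, card_filter, mul_sum, ← sum_add_distrib]
  refine sum_congr rfl fun i _ => ?_
  rcases hx i with h | h <;> rcases hy i with h' | h' <;> simp [h, h']

lemma even_card_diffSet_iff (hx : x ∈ PsiSet n) (hy : y ∈ PsiSet n) :
    Even #(diffSet x y) ↔ (Even (negCount x) ↔ Even (negCount y)) := by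
  rw [← Nat.even_add, negCount_add_negCount hx hy]
  simp [Nat.even_add]

lemma even_card_diffSet (hx : x ∈ PsiPlus n) (hy : y ∈ PsiPlus n) : Even #(diffSet x y) :=
  (even_card_diffSet_iff hx.1 hy.1).2 (iff_of_true hx.2 hy.2)

lemma update_neg_mem_psiMinus (hx : x ∈ PsiPlus n) (j : Fin n) :
    update x j (-x j) ∈ PsiMinus n := by
  have hj := (even_card_diffSet_iff hx.1 (update_neg_mem_psiSet hx.1 j)).not
  rw [diffSet_update_neg hx.1, card_singleton] at hj
  exact ⟨update_neg_mem_psiSet hx.1 j, fun h => hj.1 Nat.not_even_one (iff_of_true hx.2 h)⟩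

lemma one_mem_psiPlus : (1 : Fin n → ℤ) ∈ PsiPlus n :=
  ⟨fun _ => Or.inl rfl, by simp [negCount]⟩

lemma psiMinus_nonempty (i : Fin n) : (PsiMinus n).Nonempty :=
  ⟨_, update_neg_mem_psiMinus one_mem_psiPlus i⟩

end SignVectors

section PairFamilies

variable {α : Type*} [DecidableEq α] {s t : Finset α} {a b c : α}

lemma card_inter_pair (hab : a ≠ b) (s : Finset α) :
    #(s ∩ {a, b}) = (if a ∈ s then 1 else 0) + (if b ∈ s then 1 else 0) := by
  rw [inter_comm, ← filter_mem_eq_inter, card_filter, sum_pair hab]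

lemma card_inter_eq_one_of_card_symmDiff (hs : #s = 2) (ht : #t = 2) (hst : #(s ∆ t) = 2) :
    #(s ∩ t) = 1 := by
  have hsub : s ∩ t ⊆ s ∪ t := inter_subset_left.trans subset_union_left
  have := card_union_add_card_inter s t
  rw [symmDiff_eq_sup_sdiff_inf, sup_eq_union, inf_eq_inter, card_sdiff_of_subset hsub] at hst
  have := card_le_card hsub
  omega

lemma exists_eq_pair_of_mem (hs : #s = 2) (ha : a ∈ s) : ∃ b, b ≠ a ∧ s = {a, b} := by
  obtain ⟨b, hb⟩ := card_eq_one.1 (by rw [card_erase_of_mem ha, hs] : #(s.erase a) = 1)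
  refine ⟨b, fun hba => ?_, by rw [← hb, insert_erase ha]⟩
  simpa [hba] using hb.ge (mem_singleton_self b)

lemma eq_pair_of_mem_of_mem (hs : #s = 2) (hab : a ≠ b) (ha : a ∈ s) (hb : b ∈ s) :
    s = {a, b} :=
  (eq_of_subset_of_card_le (by simp [insert_subset_iff, ha, hb]) (by rw [hs, card_pair hab])).symm

lemma mem_triangle_of_subset (hab : a ≠ b) (hac : a ≠ c) (hbc : b ≠ c) (hs : #s = 2)
    (hsub : s ⊆ {a, b, c}) : s = {a, b} ∨ s = {b, c} ∨ s = {a, c} := by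
  obtain ⟨p, q, hpq, rfl⟩ := card_eq_two.1 hs
  have hp := hsub (mem_insert_self p {q})
  have hq := hsub (mem_insert_of_mem (mem_singleton_self q))
  simp only [mem_insert, mem_singleton] at hp hq
  rcases hp with rfl | rfl | rfl <;> rcases hq with rfl | rfl | rfl <;> simp_all [pair_comm]

theorem eq_triangle_of_pairwise_card_inter_eq_one [Nonempty α] {F : Set (Finset α)}
    (hcard : ∀ s ∈ F, #s = 2) (hinter : F.Pairwise fun s t => #(s ∩ t) = 1)
    (hstar : ∀ j, ∃ s ∈ F, j ∉ s) :
    ∃ a b c, a ≠ b ∧ a ≠ c ∧ b ≠ c ∧ F = {{a, b}, {b, c}, {a, c}} := by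
  obtain ⟨s₁, hs₁, -⟩ := hstar (Classical.arbitrary α)
  obtain ⟨a, b, hab, rfl⟩ := card_eq_two.1 (hcard s₁ hs₁)
  obtain ⟨s₂, hs₂, ha₂⟩ := hstar a
  obtain ⟨s₃, hs₃, hb₃⟩ := hstar b
  have h₁₂ : #(s₂ ∩ {a, b}) = 1 := hinter hs₂ hs₁ (by rintro rfl; simp at ha₂)
  have h₁₃ : #(s₃ ∩ {a, b}) = 1 := hinter hs₃ hs₁ (by rintro rfl; simp at hb₃)
  rw [card_inter_pair hab] at h₁₂ h₁₃
  have hb₂ : b ∈ s₂ := by split_ifs at h₁₂ <;> simp_all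
  have ha₃ : a ∈ s₃ := by split_ifs at h₁₃ <;> simp_all
  obtain ⟨c, hcb, rfl⟩ := exists_eq_pair_of_mem (hcard s₂ hs₂) hb₂
  have hac : a ≠ c := by rintro rfl; simp at ha₂
  have h₂₃ : #(s₃ ∩ {b, c}) = 1 := hinter hs₃ hs₂ (by rintro rfl; simp at hb₃)
  rw [card_inter_pair hcb.symm] at h₂₃
  have hc₃ : c ∈ s₃ := by split_ifs at h₂₃ <;> simp_all
  rw [eq_pair_of_mem_of_mem (hcard s₃ hs₃) hac ha₃ hc₃] at hs₃
  refine ⟨a, b, c, hab, hac, hcb.symm, Set.Subset.antisymm (fun s hs => ?_) ?_⟩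
  · by_contra hne
    simp only [Set.mem_insert_iff, Set.mem_singleton_iff, not_or] at hne
    have hab' : #(s ∩ {a, b}) = 1 := hinter hs hs₁ hne.1
    have hbc' : #(s ∩ {b, c}) = 1 := hinter hs hs₂ hne.2.1
    have hac' : #(s ∩ {a, c}) = 1 := hinter hs hs₃ hne.2.2
    rw [card_inter_pair hab] at hab'
    rw [card_inter_pair hcb.symm] at hbc'
    rw [card_inter_pair hac] at hac'
    split_ifs at hab' hbc' hac' <;> omega
  · simp [Set.insert_subset_iff, hs₁, hs₂, hs₃]

end PairFamilies

section Cliques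

variable {n : ℕ} {C : Set (Fin n → ℤ)} {x v : Fin n → ℤ}

lemma mem_Lset_iff {S : Finset (Fin n)} {w : Fin n → ℤ} :
    w ∈ Lset v S ↔ w ∈ PsiPlus n ∧ diffSet v w ⊆ S := by
  simp only [Lset, Set.mem_ofPred_eq, subset_iff, mem_diffSet]
  exact and_congr_right fun _ => forall_congr' fun i => not_imp_comm.trans (by rw [eq_comm])

lemma eq_Kset_of_hamming_eq_one (hv : v ∈ PsiSet n) (hC : C ⊆ PsiPlus n)
    (h : ∀ c ∈ C, hamming v c = 1) : ∃ S, C = Kset v S := by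
  classical
  have hunique : ∀ c ∈ C, ∃ i, c i ≠ v i ∧ ∀ j, j ≠ i → c j = v j := by
    intro c hc
    obtain ⟨i, hi⟩ := card_eq_one.1 (h c hc)
    refine ⟨i, fun hci => ?_, fun j hj => ?_⟩
    · simpa [hci] using hi.ge (mem_singleton_self i)
    · by_contra hcj
      exact hj (mem_singleton.1 (hi ▸ mem_diffSet.2 (Ne.symm hcj)))
  refine ⟨({i | ∃ c ∈ C, c i ≠ v i} : Finset (Fin n)),
    Set.Subset.antisymm (fun c hc => ?_) ?_⟩
  · obtain ⟨i, hci, hcj⟩ := hunique c hc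
    exact ⟨hC hc, i, mem_filter.2 ⟨mem_univ i, c, hc, hci⟩, hci, hcj⟩
  · rintro w ⟨hw, i, hiS, hwi, hwj⟩
    obtain ⟨c, hc, hci⟩ := (mem_filter.1 hiS).2
    obtain ⟨i', hci', hcj⟩ := hunique c hc
    obtain rfl : i' = i := by_contra fun h => hci (hcj i (Ne.symm h))
    convert hc using 1
    funext j
    rcases eq_or_ne j i' with rfl | hj
    · rw [eq_neg_of_ne (hv j) (hw.1 j) (Ne.symm hwi),
        eq_neg_of_ne (hv j) ((hC hc).1 j) (Ne.symm hci)]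
    · rw [hwj j hj, hcj j hj]

lemma pairwise_card_inter_diffSet (hC : C ⊆ PsiSet n)
    (hcl : C.Pairwise fun x y => hamming x y = 2) (hx : x ∈ C) :
    (diffSet x '' (C \ {x})).Pairwise fun s t => #(s ∩ t) = 1 := by
  rintro _ ⟨c, ⟨hc, hcx⟩, rfl⟩ _ ⟨c', ⟨hc', hc'x⟩, rfl⟩ hne
  refine card_inter_eq_one_of_card_symmDiff (hcl hx hc (Ne.symm hcx))
    (hcl hx hc' (Ne.symm hc'x)) ?_
  rw [← diffSet_eq_symmDiff (hC hx) (hC hc) (hC hc')]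
  exact hcl hc hc' fun h => hne (h ▸ rfl)

lemma clique_eq_Kset_of_forall_mem_diffSet (hC : C ⊆ PsiPlus n)
    (hcl : C.Pairwise fun x y => hamming x y = 2) (hx : x ∈ C) {j : Fin n}
    (hj : ∀ c ∈ C, c ≠ x → j ∈ diffSet x c) : ∃ S, C = Kset (update x j (-x j)) S := by
  have hx' := (hC hx).1
  refine eq_Kset_of_hamming_eq_one (update_neg_mem_psiSet hx' j) hC fun c hc => ?_
  rw [hamming_eq_card_diffSet, diffSet_eq_symmDiff hx' (update_neg_mem_psiSet hx' j) (hC hc).1,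
    diffSet_update_neg hx']
  rcases eq_or_ne c x with rfl | hcx
  · simp [← bot_eq_empty]
  · obtain ⟨t, htj, hD⟩ :=
      exists_eq_pair_of_mem (s := diffSet x c) (hcl hx hc hcx.symm) (hj c hc hcx)
    rw [hD, show ({j} ∆ {j, t} : Finset (Fin n)) = {t} by ext; simp [mem_symmDiff]; grind,
      card_singleton]

lemma clique_eq_Lset_of_triangle (hC : C ⊆ PsiPlus n) (hx : x ∈ C) {a b c : Fin n}
    (hab : a ≠ b) (hac : a ≠ c) (hbc : b ≠ c)
    (hF : diffSet x '' (C \ {x}) = {{a, b}, {b, c}, {a, c}}) : C = Lset x {a, b, c} := by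
  have hx' := (hC hx).1
  ext w
  rw [mem_Lset_iff]
  constructor
  · intro hw
    refine ⟨hC hw, ?_⟩
    rcases eq_or_ne w x with rfl | hwx
    · simp
    · have hD : diffSet x w ∈ diffSet x '' (C \ {x}) := ⟨w, ⟨hw, hwx⟩, rfl⟩
      rw [hF] at hD
      rcases hD with hD | hD | hD <;> rw [hD] <;> simp [insert_subset_iff]
  · rintro ⟨hw, hsub⟩
    have hle : #(diffSet x w) ≤ 3 := (card_le_card hsub).trans card_le_three
    obtain ⟨k, hk⟩ := even_card_diffSet (hC hx) hw
    obtain h0 | h2 : #(diffSet x w) = 0 ∨ #(diffSet x w) = 2 := by omega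
    · rwa [eq_of_diffSet_eq hx' hw.1 hx' (by rw [card_eq_zero.1 h0, diffSet_self])]
    · have hD : diffSet x w ∈ diffSet x '' (C \ {x}) := by
        rw [hF]; simpa using mem_triangle_of_subset hab hac hbc h2 hsub
      obtain ⟨c', ⟨hc', -⟩, hD⟩ := hD
      rwa [eq_of_diffSet_eq hx' hw.1 (hC hc').1 hD.symm]

end Cliques

theorem stmt13 (n : ℕ) (hn : 4 ≤ n) (C : Set (Fin n → ℤ)) (hC : C ⊆ PsiPlus n)
    (hclique : ∀ x ∈ C, ∀ y ∈ C, x ≠ y → hamming x y = 2) :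
    (∃ v' ∈ PsiMinus n, ∃ S : Finset (Fin n), C = Kset v' S) ∨
    (∃ v ∈ PsiPlus n, ∃ S : Finset (Fin n), S.card = 3 ∧ C = Lset v S) := by
  let i₀ : Fin n := ⟨0, by omega⟩
  have : Nonempty (Fin n) := ⟨i₀⟩
  rcases C.eq_empty_or_nonempty with rfl | ⟨x, hx⟩
  · obtain ⟨v', hv'⟩ := psiMinus_nonempty i₀
    exact .inl ⟨v', hv', eq_Kset_of_hamming_eq_one hv'.1 (Set.empty_subset _) (by simp)⟩
  by_cases hstar : ∃ j, ∀ s ∈ diffSet x '' (C \ {x}), j ∈ s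
  · obtain ⟨j, hj⟩ := hstar
    exact .inl ⟨_, update_neg_mem_psiMinus (hC hx) j,
      clique_eq_Kset_of_forall_mem_diffSet hC hclique hx fun c hc hcx =>
        hj _ ⟨c, ⟨hc, hcx⟩, rfl⟩⟩
  · push Not at hstar
    obtain ⟨a, b, c, hab, hac, hbc, hF⟩ := eq_triangle_of_pairwise_card_inter_eq_one
      (by rintro _ ⟨c, ⟨hc, hcx⟩, rfl⟩; exact hclique x hx c hc (Ne.symm hcx))
      (pairwise_card_inter_diffSet (fun c hc => (hC hc).1) hclique hx) hstar
    exact .inr ⟨x, hC hx, {a, b, c}, card_eq_three.2 ⟨a, b, c, hab, hac, hbc, rfl⟩,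
      clique_eq_Lset_of_triangle hC hx hab hac hbc hF⟩
end

section
/- For n > 4, a 4-clique of the half cube graph ½H_n can be extended to a 5-clique if and only if it is of the form K(v',S) with v' ∈ Ψ⁻_n and |S| = 4; 4-cliques of the form L(v,S) with |S| = 3 cannot be extended to a 5-clique. -/
/-- A clique of the half cube graph: a set of vertices of `Ψ⁺ₙ` that are pairwise
at Hamming distance 2. -/
def IsHClique {n : ℕ} (C : Set (Fin n → ℤ)) : Prop :=
  C ⊆ PsiPlus n ∧ ∀ x ∈ C, ∀ y ∈ C, x ≠ y → hamming x y = 2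

/-! Fix a vertex `a` of a clique. Every other vertex `x` is recovered from the 2-set
`diffSet a x` of coordinates where it differs from `a`, and two such vertices are adjacent iff
their 2-sets meet in exactly one point. Three 2-sets meeting pairwise in one point share a point
or form a triangle `{i, j}, {i, k}, {j, k}`, and no set meets every side of a triangle in exactly
one point. Hence the 2-sets of a 5-clique through `a` form a star `{i, j}, {i, k}, {i, l}, …`,
and a star around `a` is `K(v', {i, j, k, l})` with `v'` the flip of `a` at `i`. Conversely
`K(v', S)` extends to `K(v', S ∪ {m})` for any `m ∉ S`, while `L(v, {i, j, k})` contains `v` and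
its flips along the three sides of the triangle, so nothing extends it. -/

open Finset
open scoped symmDiff

namespace Finset
variable {α : Type*} [DecidableEq α] {s t : Finset α}

lemma card_symmDiff_add_two_mul_card_inter (s t : Finset α) :
    #(s ∆ t) + 2 * #(s ∩ t) = #s + #t := by
  rw [symmDiff_eq_sup_sdiff_inf, sup_eq_union, inf_eq_inter,
    card_sdiff_of_subset inter_subset_union, ← card_union_add_card_inter s t]
  have := card_le_card (inter_subset_union (s := s) (t := t))
  omega

lemma even_card_symmDiff_iff : Even #(s ∆ t) ↔ (Even #s ↔ Even #t) := by
  rw [← Nat.even_add, ← card_symmDiff_add_two_mul_card_inter]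
  simp [Nat.even_add]

lemma card_symmDiff_eq_two_iff (hs : #s = 2) (ht : #t = 2) :
    #(s ∆ t) = 2 ↔ #(s ∩ t) = 1 := by
  have := card_symmDiff_add_two_mul_card_inter s t
  omega

lemma card_inter_pair_eq_one_iff {i j : α} (hij : i ≠ j) :
    #(s ∩ {i, j}) = 1 ↔ (i ∈ s ↔ j ∉ s) := by
  by_cases hi : i ∈ s <;> by_cases hj : j ∈ s <;>
    simp [inter_insert_of_mem, inter_insert_of_notMem, inter_singleton_of_mem,
      inter_singleton_of_notMem, hi, hj, hij]

lemma not_forall_card_inter_pair_eq_one {i j k : α} (hij : i ≠ j) (hik : i ≠ k) (hjk : j ≠ k) :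
    ¬ (#(s ∩ {i, j}) = 1 ∧ #(s ∩ {i, k}) = 1 ∧ #(s ∩ {j, k}) = 1) := by
  rw [card_inter_pair_eq_one_iff hij, card_inter_pair_eq_one_iff hik,
    card_inter_pair_eq_one_iff hjk]
  tauto

lemma exists_eq_pair_of_mem {i : α} (hs : #s = 2) (hi : i ∈ s) : ∃ j, j ≠ i ∧ s = {i, j} := by
  obtain ⟨x, y, hxy, rfl⟩ := card_eq_two.1 hs
  rcases mem_insert.1 hi with rfl | hi
  · exact ⟨y, hxy.symm, rfl⟩
  · rw [mem_singleton.1 hi]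
    exact ⟨x, hxy, pair_comm _ _⟩

lemma exists_star_of_card_inter_eq_one {B C D E : Finset α}
    (hB : #B = 2) (hC : #C = 2) (hD : #D = 2)
    (hBC : #(B ∩ C) = 1) (hBD : #(B ∩ D) = 1) (hBE : #(B ∩ E) = 1)
    (hCD : #(C ∩ D) = 1) (hCE : #(C ∩ E) = 1) (hDE : #(D ∩ E) = 1) :
    ∃ i j k l, [i, j, k, l].Nodup ∧ B = {i, j} ∧ C = {i, k} ∧ D = {i, l} := by
  have ne_of_card_inter {X Y : Finset α} (hX : #X = 2) (hXY : #(X ∩ Y) = 1) : X ≠ Y := by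
    rintro rfl
    rw [inter_self] at hXY
    omega
  obtain ⟨i, hi⟩ := card_eq_one.1 hBC
  have hiBC : i ∈ B ∩ C := hi ▸ mem_singleton_self i
  obtain ⟨j, hji, rfl⟩ := exists_eq_pair_of_mem hB (mem_inter.1 hiBC).1
  obtain ⟨k, hki, rfl⟩ := exists_eq_pair_of_mem hC (mem_inter.1 hiBC).2
  have hjk : j ≠ k := by rintro rfl; exact ne_of_card_inter hB hBC rfl
  by_cases hiD : i ∈ D
  · obtain ⟨l, hli, rfl⟩ := exists_eq_pair_of_mem hD hiD
    have hjl : j ≠ l := by rintro rfl; exact ne_of_card_inter hB hBD rfl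
    have hkl : k ≠ l := by rintro rfl; exact ne_of_card_inter hC hCD rfl
    exact ⟨i, j, k, l, by simp [*, hji.symm, hki.symm, hli.symm], rfl, rfl, rfl⟩
  · -- `D` would be the third side `{j, k}` of a triangle, which no set `E` meets once per side
    have hjD : j ∈ D := by
      have := (card_inter_pair_eq_one_iff hji.symm).1 (by rw [inter_comm]; exact hBD)
      tauto
    have hkD : k ∈ D := by
      have := (card_inter_pair_eq_one_iff hki.symm).1 (by rw [inter_comm]; exact hCD)
      tauto
    have hDjk : D = {j, k} :=
      (eq_of_subset_of_card_le (insert_subset hjD (singleton_subset_iff.2 hkD))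
        (by rw [hD, card_pair hjk])).symm
    subst hDjk
    rw [inter_comm] at hBE hCE hDE
    exact absurd ⟨hBE, hCE, hDE⟩
      (not_forall_card_inter_pair_eq_one (s := E) hji.symm hki.symm hjk)

end Finset

namespace HalfCube
variable {n : ℕ} {v a x y : Fin n → ℤ} {S T : Finset (Fin n)}

def diffSet (x y : Fin n → ℤ) : Finset (Fin n) := univ.filter fun i => x i ≠ y i

def flipOn (v : Fin n → ℤ) (T : Finset (Fin n)) : Fin n → ℤ := fun i => if i ∈ T then -v i else v i

@[simp]
lemma mem_diffSet {i : Fin n} : i ∈ diffSet x y ↔ x i ≠ y i := by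
  simp [diffSet]

lemma hamming_eq_card_diffSet (x y : Fin n → ℤ) : hamming x y = #(diffSet x y) := rfl

lemma flipOn_empty (v : Fin n → ℤ) : flipOn v ∅ = v := by
  funext i
  simp [flipOn]

lemma flipOn_flipOn (v : Fin n → ℤ) (T U : Finset (Fin n)) :
    flipOn (flipOn v T) U = flipOn v (T ∆ U) := by
  funext i
  by_cases hT : i ∈ T <;> by_cases hU : i ∈ U <;> simp [flipOn, mem_symmDiff, hT, hU]

lemma flipOn_mem_psiSet (hv : v ∈ PsiSet n) (T : Finset (Fin n)) : flipOn v T ∈ PsiSet n := by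
  intro i
  by_cases hT : i ∈ T <;> rcases hv i with h | h <;> simp [flipOn, hT, h]

lemma diffSet_flipOn_flipOn (hv : v ∈ PsiSet n) (T U : Finset (Fin n)) :
    diffSet (flipOn v T) (flipOn v U) = T ∆ U := by
  ext i
  by_cases hT : i ∈ T <;> by_cases hU : i ∈ U <;> rcases hv i with h | h <;>
    simp [flipOn, mem_symmDiff, hT, hU, h]

lemma diffSet_flipOn (hv : v ∈ PsiSet n) (T : Finset (Fin n)) : diffSet v (flipOn v T) = T := by
  have := diffSet_flipOn_flipOn hv ∅ T
  rwa [flipOn_empty, ← bot_eq_empty, bot_symmDiff] at this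

lemma flipOn_diffSet (hv : v ∈ PsiSet n) (hx : x ∈ PsiSet n) : flipOn v (diffSet v x) = x := by
  funext i
  rcases hv i with h | h <;> rcases hx i with h' | h' <;> simp [flipOn, h, h']

lemma hamming_eq_card_symmDiff (ha : a ∈ PsiSet n) (hx : x ∈ PsiSet n) (hy : y ∈ PsiSet n) :
    hamming x y = #(diffSet a x ∆ diffSet a y) := by
  rw [hamming_eq_card_diffSet, ← diffSet_flipOn_flipOn ha, flipOn_diffSet ha hx,
    flipOn_diffSet ha hy]

lemma negCount_eq_card_diffSet (hv : v ∈ PsiSet n) : negCount v = #(diffSet 1 v) := by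
  unfold negCount diffSet
  congr 1
  ext i
  rcases hv i with h | h <;> simp [h]

lemma even_negCount_flipOn_iff (hv : v ∈ PsiSet n) (T : Finset (Fin n)) :
    Even (negCount (flipOn v T)) ↔ (Even (negCount v) ↔ Even #T) := by
  have h1 : (1 : Fin n → ℤ) ∈ PsiSet n := fun _ => .inl rfl
  rw [negCount_eq_card_diffSet (flipOn_mem_psiSet hv T), negCount_eq_card_diffSet hv,
    ← flipOn_diffSet h1 hv, flipOn_flipOn, diffSet_flipOn h1, flipOn_diffSet h1 hv,
    even_card_symmDiff_iff]

lemma flipOn_mem_psiPlus (hv : v ∈ PsiPlus n) (hT : Even #T) : flipOn v T ∈ PsiPlus n :=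
  ⟨flipOn_mem_psiSet hv.1 T, by simp [even_negCount_flipOn_iff hv.1, hv.2, hT]⟩

lemma flipOn_mem_psiMinus (hv : v ∈ PsiPlus n) (hT : ¬ Even #T) : flipOn v T ∈ PsiMinus n :=
  ⟨flipOn_mem_psiSet hv.1 T, by simp [even_negCount_flipOn_iff hv.1, hv.2, hT]⟩

lemma flipOn_mem_psiPlus_of_mem_psiMinus (hv : v ∈ PsiMinus n) (hT : ¬ Even #T) :
    flipOn v T ∈ PsiPlus n :=
  ⟨flipOn_mem_psiSet hv.1 T, by simp [even_negCount_flipOn_iff hv.1, hv.2, hT]⟩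

lemma Kset_eq_image (hv : v ∈ PsiMinus n) (S : Finset (Fin n)) :
    Kset v S = (fun i => flipOn v {i}) '' S := by
  ext w
  simp only [Kset, Set.mem_ofPred_eq, Set.mem_image, mem_coe]
  constructor
  · rintro ⟨hw, i, hi, hwi, hwj⟩
    refine ⟨i, hi, funext fun j => ?_⟩
    by_cases hj : j = i
    · subst hj
      rcases hv.1 j with h | h <;> rcases hw.1 j with h' | h' <;> simp_all [flipOn]
    · simp [flipOn, hj, hwj j hj]
  · rintro ⟨i, hi, rfl⟩
    refine ⟨flipOn_mem_psiPlus_of_mem_psiMinus hv (by simp), i, hi, ?_,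
      fun j hj => by simp [flipOn, hj]⟩
    rcases hv.1 i with h | h <;> simp [flipOn, h]

lemma isHClique_Kset (hv : v ∈ PsiMinus n) (S : Finset (Fin n)) : IsHClique (Kset v S) := by
  rw [Kset_eq_image hv]
  refine ⟨?_, ?_⟩
  · rintro _ ⟨i, -, rfl⟩
    exact flipOn_mem_psiPlus_of_mem_psiMinus hv (by simp)
  · rintro _ ⟨i, -, rfl⟩ _ ⟨j, -, rfl⟩ hne
    have hij : i ≠ j := by rintro rfl; exact hne rfl
    rw [hamming_eq_card_diffSet, diffSet_flipOn_flipOn hv.1,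
      symmDiff_eq_union (disjoint_singleton.2 hij), ← insert_eq, card_pair hij]

lemma exists_isHClique_insert_Kset (hv : v ∈ PsiMinus n) (hS : #S < n) :
    ∃ w ∉ Kset v S, IsHClique (insert w (Kset v S)) := by
  obtain ⟨i, -, hi⟩ := exists_mem_notMem_of_card_lt_card (s := S) (t := univ) (by simpa using hS)
  refine ⟨flipOn v {i}, ?_, ?_⟩
  · rw [Kset_eq_image hv]
    rintro ⟨j, hj, hji⟩
    have : ({j} : Finset (Fin n)) = {i} := by
      simpa [diffSet_flipOn hv.1] using congrArg (diffSet v) hji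
    exact hi (singleton_injective this ▸ hj)
  · have := isHClique_Kset hv (insert i S)
    rwa [Kset_eq_image hv, coe_insert, Set.image_insert_eq, ← Kset_eq_image hv] at this

lemma flipOn_mem_Lset (hv : v ∈ PsiPlus n) (hTS : T ⊆ S) (hT : Even #T) :
    flipOn v T ∈ Lset v S :=
  ⟨flipOn_mem_psiPlus hv hT, fun i hi => by simp [flipOn, show i ∉ T from fun h => hi (hTS h)]⟩

lemma not_isHClique_insert_Lset {w : Fin n → ℤ} (hv : v ∈ PsiPlus n) (hS : #S = 3)
    (hw : w ∉ Lset v S) : ¬ IsHClique (insert w (Lset v S)) := by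
  intro hC
  obtain ⟨i, j, k, hij, hik, hjk, rfl⟩ := card_eq_three.1 hS
  have hwP : w ∈ PsiPlus n := hC.1 (Set.mem_insert _ _)
  have dist (T : Finset (Fin n)) (hTS : T ⊆ {i, j, k}) (hT : Even #T) :
      #(diffSet v w ∆ T) = 2 := by
    have hTL := flipOn_mem_Lset hv hTS hT
    have := hC.2 w (Set.mem_insert _ _) _ (Set.mem_insert_of_mem _ hTL) (fun h => hw (h ▸ hTL))
    rwa [hamming_eq_card_symmDiff hv.1 hwP.1 (flipOn_mem_psiSet hv.1 T),
      diffSet_flipOn hv.1] at this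
  have hW : #(diffSet v w) = 2 := by
    simpa [← bot_eq_empty] using dist ∅ (empty_subset _) (by simp)
  have meet (p q : Fin n) (hpq : p ≠ q) (h : {p, q} ⊆ ({i, j, k} : Finset (Fin n))) :
      #(diffSet v w ∩ {p, q}) = 1 :=
    (card_symmDiff_eq_two_iff hW (card_pair hpq)).1 (dist _ h (by simp [card_pair hpq]))
  exact not_forall_card_inter_pair_eq_one hij hik hjk
    ⟨meet i j hij (by simp), meet i k hik (by simp [insert_subset_iff]),
      meet j k hjk (by simp)⟩

lemma _root_.IsHClique.card_diffSet_inter_eq_one {C : Set (Fin n → ℤ)} (hC : IsHClique C)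
    (ha : a ∈ C) (hx : x ∈ C) (hy : y ∈ C) (hax : a ≠ x) (hay : a ≠ y) (hxy : x ≠ y) :
    #(diffSet a x ∩ diffSet a y) = 1 := by
  have hxy' := hC.2 x hx y hy hxy
  rw [hamming_eq_card_symmDiff (hC.1 ha).1 (hC.1 hx).1 (hC.1 hy).1] at hxy'
  exact (card_symmDiff_eq_two_iff (hC.2 a ha x hx hax) (hC.2 a ha y hy hay)).1 hxy'

lemma insert_eq_Kset_of_diffSet_eq_pair {b c d : Fin n → ℤ} (ha : a ∈ PsiPlus n)
    (hb : b ∈ PsiSet n) (hc : c ∈ PsiSet n) (hd : d ∈ PsiSet n) {i j k l : Fin n}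
    (hij : i ≠ j) (hik : i ≠ k) (hil : i ≠ l) (hab : diffSet a b = {i, j})
    (hac : diffSet a c = {i, k}) (had : diffSet a d = {i, l}) :
    ({a, b, c, d} : Set (Fin n → ℤ)) = Kset (flipOn a {i}) {i, j, k, l} := by
  have flipOn_flipOn_singleton {m : Fin n} {x : Fin n → ℤ} (hm : i ≠ m) (hx : x ∈ PsiSet n)
      (hax : diffSet a x = {i, m}) : flipOn (flipOn a {i}) {m} = x := by
    rw [flipOn_flipOn, symmDiff_eq_union (disjoint_singleton.2 hm), ← insert_eq, ← hax,
      flipOn_diffSet ha.1 hx]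
  rw [Kset_eq_image (flipOn_mem_psiMinus ha (by simp))]
  simp only [coe_insert, coe_singleton, Set.image_insert_eq, Set.image_singleton]
  rw [flipOn_flipOn_singleton hij hb hab, flipOn_flipOn_singleton hik hc hac,
    flipOn_flipOn_singleton hil hd had, flipOn_flipOn, symmDiff_self, bot_eq_empty, flipOn_empty]

lemma exists_eq_Kset_of_isHClique_insert {C : Set (Fin n → ℤ)} {w : Fin n → ℤ} (hw : w ∉ C)
    (hC : IsHClique (insert w C)) (h4 : C.ncard = 4) :
    ∃ v ∈ PsiMinus n, ∃ S : Finset (Fin n), #S = 4 ∧ C = Kset v S := by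
  obtain ⟨a, b, c, d, hab, hac, had, hbc, hbd, hcd, rfl⟩ := Set.ncard_eq_four.1 h4
  simp only [Set.mem_insert_iff, Set.mem_singleton_iff, not_or] at hw
  obtain ⟨hwa, hwb, hwc, hwd⟩ := hw
  set Cw : Set (Fin n → ℤ) := insert w {a, b, c, d}
  obtain ⟨ha, hb, hc, hd, hw⟩ : a ∈ Cw ∧ b ∈ Cw ∧ c ∈ Cw ∧ d ∈ Cw ∧ w ∈ Cw := by simp [Cw]
  obtain ⟨i, j, k, l, hijkl, hB, hC', hD⟩ := exists_star_of_card_inter_eq_one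
    (hC.2 a ha b hb hab) (hC.2 a ha c hc hac) (hC.2 a ha d hd had)
    (hC.card_diffSet_inter_eq_one ha hb hc hab hac hbc)
    (hC.card_diffSet_inter_eq_one ha hb hd hab had hbd)
    (hC.card_diffSet_inter_eq_one ha hb hw hab (Ne.symm hwa) (Ne.symm hwb))
    (hC.card_diffSet_inter_eq_one ha hc hd hac had hcd)
    (hC.card_diffSet_inter_eq_one ha hc hw hac (Ne.symm hwa) (Ne.symm hwc))
    (hC.card_diffSet_inter_eq_one ha hd hw had (Ne.symm hwa) (Ne.symm hwd))
  simp only [List.nodup_cons, List.mem_cons, List.not_mem_nil, not_or] at hijkl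
  obtain ⟨⟨hij, hik, hil, -⟩, ⟨hjk, hjl, -⟩, ⟨hkl, -⟩, -⟩ := hijkl
  refine ⟨flipOn a {i}, flipOn_mem_psiMinus (hC.1 ha) (by simp), {i, j, k, l}, ?_,
    insert_eq_Kset_of_diffSet_eq_pair (hC.1 ha) (hC.1 hb).1 (hC.1 hc).1 (hC.1 hd).1
      hij hik hil hB hC' hD⟩
  simp [card_insert_of_notMem, *]

end HalfCube

theorem stmt14 (n : ℕ) (hn : 4 < n) :
    (∀ C : Set (Fin n → ℤ), IsHClique C → C.ncard = 4 →
      ((∃ w ∉ C, IsHClique (insert w C)) ↔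
        ∃ v' ∈ PsiMinus n, ∃ S : Finset (Fin n), S.card = 4 ∧ C = Kset v' S)) ∧
    (∀ v ∈ PsiPlus n, ∀ S : Finset (Fin n), S.card = 3 →
      ¬ ∃ w ∉ Lset v S, IsHClique (insert w (Lset v S))) := by
  refine ⟨fun C _ hC4 => ⟨?_, ?_⟩, ?_⟩
  · rintro ⟨w, hw, hC⟩
    exact HalfCube.exists_eq_Kset_of_isHClique_insert hw hC hC4
  · rintro ⟨v', hv', S, hS, rfl⟩
    exact HalfCube.exists_isHClique_insert_Kset hv' (hS ▸ hn)
  · rintro v hv S hS ⟨w, hw, hC⟩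
    exact HalfCube.not_isHClique_insert_Lset hv hS hw hC
end

section
/- For n ≥ 4 and 3 ≤ k ≤ n, the alternating-sum identity ∑_{i=k}^{n} (-1)^{k+i} 2^{n-i} C(n,i) = ∑_{i=k}^{n} C(n,i)·C(i-1, k-1) holds. -/
/-!
Write `a k` and `b k` for the two sides. Both satisfy the recurrence
`x k + x (k + 1) = C(n, k) 2^(n - k)` for `k ≥ 1`: for `a` by splitting off the term `i = k`,
for `b` by Pascal's rule `C(i-1, k-1) + C(i-1, k) = C(i, k)` together with
`∑ᵢ C(n, i) C(i, k) = C(n, k) 2^(n - k)`. Both vanish for `k > n`, so they agree by downward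
induction on `k`.
-/

open Finset

namespace Nat

theorem sum_Icc_choose_mul_choose_s19 (n k : ℕ) :
    ∑ i ∈ Icc k n, n.choose i * i.choose k = n.choose k * 2 ^ (n - k) := by
  rcases lt_or_ge n k with hnk | hkn
  · simp [Icc_eq_empty_of_lt hnk, choose_eq_zero_of_lt hnk]
  rw [← Ico_add_one_right_eq_Icc, sum_Ico_eq_sum_range, show n + 1 - k = n - k + 1 by omega,
    ← sum_range_choose (n - k), mul_sum]
  refine sum_congr rfl fun j _ => ?_
  rw [choose_mul (le_add_right k j), Nat.add_sub_cancel_left]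

end Nat

theorem alternating_sum_Icc_add_succ (n k : ℕ) :
    ∑ i ∈ Icc k n, (-1 : ℤ) ^ (k + i) * 2 ^ (n - i) * n.choose i
      + ∑ i ∈ Icc (k + 1) n, (-1 : ℤ) ^ (k + 1 + i) * 2 ^ (n - i) * n.choose i
      = n.choose k * 2 ^ (n - k) := by
  rcases lt_or_ge n k with hnk | hkn
  · simp [Icc_eq_empty_of_lt hnk, Icc_eq_empty_of_lt (Nat.lt_succ_of_lt hnk),
      Nat.choose_eq_zero_of_lt hnk]
  rw [← insert_Icc_add_one_left_eq_Icc hkn, sum_insert (by simp),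
    add_assoc, ← sum_add_distrib]
  simp only [pow_succ, add_right_comm k 1]
  simp [mul_comm]

theorem sum_Icc_choose_mul_choose_pred_add_succ (n k : ℕ) (hk : 1 ≤ k) :
    ∑ i ∈ Icc k n, (n.choose i : ℤ) * (i - 1).choose (k - 1)
      + ∑ i ∈ Icc (k + 1) n, (n.choose i : ℤ) * (i - 1).choose k
      = n.choose k * 2 ^ (n - k) := by
  have hb : ∑ i ∈ Icc (k + 1) n, (n.choose i : ℤ) * (i - 1).choose k
      = ∑ i ∈ Icc k n, (n.choose i : ℤ) * (i - 1).choose k := by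
    rcases lt_or_ge n k with hnk | hkn
    · simp [Icc_eq_empty_of_lt hnk, Icc_eq_empty_of_lt (Nat.lt_succ_of_lt hnk)]
    rw [← insert_Icc_add_one_left_eq_Icc hkn, sum_insert (by simp),
      Nat.choose_eq_zero_of_lt (by omega : k - 1 < k)]
    simp
  have pascal : ∀ i ∈ Icc k n, (i - 1).choose (k - 1) + (i - 1).choose k = i.choose k := by
    intro i hi
    obtain ⟨j, rfl⟩ : ∃ j, i = j + 1 := ⟨i - 1, by grind⟩
    obtain ⟨l, rfl⟩ : ∃ l, k = l + 1 := ⟨k - 1, by omega⟩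
    simp [Nat.choose_succ_succ]
  rw [hb, ← sum_add_distrib]
  simp only [← mul_add]
  exact_mod_cast (sum_congr rfl fun i hi => by rw [pascal i hi]).trans
    (Nat.sum_Icc_choose_mul_choose_s19 n k)

theorem alternating_sum_Icc_eq_sum_choose_mul_choose_pred (n k : ℕ) (hk : 1 ≤ k) :
    ∑ i ∈ Icc k n, (-1 : ℤ) ^ (k + i) * 2 ^ (n - i) * n.choose i
      = ∑ i ∈ Icc k n, (n.choose i : ℤ) * (i - 1).choose (k - 1) := by
  rcases lt_or_ge n k with hnk | _
  · simp [Icc_eq_empty_of_lt hnk]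
  have ih := alternating_sum_Icc_eq_sum_choose_mul_choose_pred n (k + 1) (by omega)
  rw [Nat.add_sub_cancel] at ih
  linarith [alternating_sum_Icc_add_succ n k, sum_Icc_choose_mul_choose_pred_add_succ n k hk]
termination_by n + 1 - k

theorem stmt19_general (n k : ℕ) (h3 : 3 ≤ k) :
    ∑ i ∈ Finset.Icc k n, (-1 : ℤ) ^ (k + i) * 2 ^ (n - i) * (n.choose i)
      = ∑ i ∈ Finset.Icc k n, (n.choose i : ℤ) * ((i - 1).choose (k - 1)) :=
  alternating_sum_Icc_eq_sum_choose_mul_choose_pred n k (by omega)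

theorem stmt19 (n k : ℕ) (hn : 4 ≤ n) (h3 : 3 ≤ k) (hkn : k ≤ n) :
    ∑ i ∈ Finset.Icc k n, (-1 : ℤ) ^ (k + i) * 2 ^ (n - i) * (n.choose i)
      = ∑ i ∈ Finset.Icc k n, (n.choose i : ℤ) * ((i - 1).choose (k - 1)) :=
  stmt19_general n k h3
end
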